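/- In the NP-hardness reduction: the set X := V ∪ W ∪ {V[⊥,⊥,⊥]} is a minimum vertex cover of the constructed graph G', because G' contains a matching of size |X|, namely the pendant edges at the vertices of W ∪ {V[⊥,⊥,⊥]} together with, for each i ∈ [q], the three matching edges {V[i,⊥,z] U[i,1,z] : z ∈ {1,2,3}}. -/

import Mathlib

open SimpleGraph

/-- A set of vertices is a vertex cover if it meets every edge. -/
def IsVertexCover {V : Type*} (G : SimpleGraph V) (C : Set V) : Prop :=
  ∀ ⦃u v : V⦄, G.Adj u v → u ∈ C ∨ v ∈ C

/-- The minimum vertex cover number of a graph. -/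
noncomputable def vc {V : Type*} (G : SimpleGraph V) : ℕ :=
  sInf {n | ∃ C : Set V, _root_.IsVertexCover G C ∧ C.Finite ∧ Nat.card C = n}

/-- `X` is a minimum vertex cover of `G`. -/
def IsMinVertexCover {V : Type*} (G : SimpleGraph V) (X : Set V) : Prop :=
  _root_.IsVertexCover G X ∧ ∀ C : Set V, _root_.IsVertexCover G C → Nat.card X ≤ Nat.card C

/-- The rank of a graph: number of vertices minus number of connected components. -/
noncomputable def grank {V : Type*} (G : SimpleGraph V) : ℕ :=
  Nat.card V - Nat.card G.ConnectedComponent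

/-- The rank of a set of vertices: the rank of the induced subgraph. -/
noncomputable def srank {V : Type*} (G : SimpleGraph V) (S : Set V) : ℕ :=
  grank (G.induce S)

/-- The set of endpoints of a set of edges. -/
def edgeVerts {V : Type*} (F : Set (Sym2 V)) : Set V := {v | ∃ e ∈ F, v ∈ e}

/-- The setoid identifying the vertices connected through edges of `F`. -/
def contractSetoid {V : Type*} (F : Set (Sym2 V)) : Setoid V :=
  (SimpleGraph.fromEdgeSet F).reachableSetoid

/-- The graph obtained from `G` by contracting all the edges in `F`. -/
def contract {V : Type*} (G : SimpleGraph V) (F : Set (Sym2 V)) :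
    SimpleGraph (Quotient (contractSetoid F)) where
  Adj a b := a ≠ b ∧ ∃ u v : V, Quotient.mk (contractSetoid F) u = a ∧
    Quotient.mk (contractSetoid F) v = b ∧ G.Adj u v
  symm := by
    refine ⟨?_⟩
    rintro a b ⟨hab, u, v, hu, hv, h⟩
    exact ⟨hab.symm, v, u, hv, hu, h.symm⟩
  loopless := by refine ⟨?_⟩; rintro a ⟨h, -⟩; exact h rfl


/-- Vertex type of the graph `G'` of the NP-hardness reduction:
`V`-vertices, `W`-vertices, their pendant `P`-vertices, `U`-vertices,
the hub `V[⊥,⊥,⊥]` and its pendant `P[⊥,⊥,⊥]`. -/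
abbrev VT (q l : ℕ) : Type :=
  (Fin q × Fin 3) ⊕ ((Fin q × Fin l) ⊕ ((Fin q × Fin l) ⊕
    ((Fin q × Fin l × Fin 3) ⊕ (Unit ⊕ Unit))))

/-- The graph `G'` of the NP-hardness reduction. -/
def Gnp {q l : ℕ} (G : SimpleGraph (Fin q × Fin 3)) : SimpleGraph (VT q l) :=
  SimpleGraph.fromRel (fun a b =>
    match a, b with
    | .inl a, .inl b => G.Adj a b                                    -- edges of G
    | .inr (.inl w), .inr (.inr (.inl p)) => w = p                   -- W[i,j] – P[i,j]
    | .inr (.inl w), .inr (.inr (.inr (.inl u))) =>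
        w.1 = u.1 ∧ w.2 = u.2.1                                      -- W[i,j] – U[i,j,z]
    | .inl a, .inr (.inr (.inr (.inl u))) =>
        a.1 = u.1 ∧ a.2 = u.2.2                                      -- V[i,z] – U[i,j,z]
    | .inr (.inr (.inr (.inr (.inl _)))), .inl _ => True             -- hub – V
    | .inr (.inr (.inr (.inr (.inl _)))), .inr (.inr (.inr (.inl _))) => True -- hub – U
    | .inr (.inr (.inr (.inr (.inl _)))), .inr (.inr (.inr (.inr (.inr _)))) => True -- hub – P[⊥]
    | _, _ => False)

/-- The set `X = V ∪ W ∪ {V[⊥,⊥,⊥]}`. -/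
def Xset (q l : ℕ) : Set (VT q l) :=
  {w | match w with
    | .inl _ => True
    | .inr (.inl _) => True
    | .inr (.inr (.inr (.inr (.inl _)))) => True
    | _ => False}

/-
A matching certifies a lower bound on every vertex cover, since each matching edge needs its own
cover vertex. Matching every vertex of `X` to a private neighbour outside `X` (`V[i,⊥,z]` to
`U[i,1,z]`, `W[i,j,⊥]` to `P[i,j,⊥]`, the hub to `P[⊥,⊥,⊥]`) therefore yields a matching of size
`|X|`, and as `X` covers every edge of `G'` it is a minimum vertex cover.
-/

variable {V : Type*} {G : SimpleGraph V}

namespace SimpleGraph.Subgraph.IsMatching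

theorem card_edgeSet_le_of_isVertexCover {M : G.Subgraph} (hM : M.IsMatching) {C : Set V}
    (hC : _root_.IsVertexCover G C) (hfin : C.Finite) : Nat.card M.edgeSet ≤ Nat.card C := by
  have : Finite ↑(C ∩ M.verts) := hfin.subset Set.inter_subset_left
  let toEdge : ↑(C ∩ M.verts) → M.edgeSet := fun v => hM.toEdge ⟨v, v.2.2⟩
  have hsurj : Function.Surjective toEdge := by
    rintro ⟨e, he⟩
    induction e using Sym2.ind with
    | _ u v =>
      rcases hC (M.adj_sub he) with hu | hv
      · exact ⟨⟨u, hu, M.edge_vert he⟩, hM.toEdge_eq_of_adj he⟩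
      · exact ⟨⟨v, hv, M.edge_vert he.symm⟩, by
          simpa [toEdge, Sym2.eq_swap] using hM.toEdge_eq_of_adj he.symm⟩
  calc Nat.card M.edgeSet ≤ Nat.card ↑(C ∩ M.verts) := Nat.card_le_card_of_surjective _ hsurj
    _ ≤ Nat.card C := Nat.card_mono hfin Set.inter_subset_left

end SimpleGraph.Subgraph.IsMatching

theorem isMinVertexCover_of_isMatching_card_eq [Finite V] {X : Set V}
    (hX : _root_.IsVertexCover G X) {M : G.Subgraph} (hM : M.IsMatching)
    (hcard : Nat.card M.edgeSet = Nat.card X) : IsMinVertexCover G X :=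
  ⟨hX, fun _ hC => hcard ▸ hM.card_edgeSet_le_of_isVertexCover hC (Set.toFinite _)⟩

section MatchingOfPartner

def matchingOfPartner (C : Set V) (f : V → V) (hadj : ∀ x ∈ C, G.Adj x (f x)) : G.Subgraph where
  verts := C ∪ f '' C
  Adj v w := (v ∈ C ∧ f v = w) ∨ (w ∈ C ∧ f w = v)
  adj_sub := by
    rintro v w (⟨hv, rfl⟩ | ⟨hw, rfl⟩)
    · exact hadj v hv
    · exact (hadj w hw).symm
  edge_vert := by
    rintro v w (⟨hv, -⟩ | ⟨hw, rfl⟩)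
    · exact Or.inl hv
    · exact Or.inr ⟨w, hw, rfl⟩
  symm := ⟨fun _ _ => Or.symm⟩

variable {C : Set V} {f : V → V} (hadj : ∀ x ∈ C, G.Adj x (f x))
include hadj

theorem isMatching_matchingOfPartner (hf : Set.InjOn f C) (hout : Set.MapsTo f C Cᶜ) :
    (matchingOfPartner C f hadj).IsMatching := by
  rintro v (hv | ⟨x, hx, rfl⟩)
  · refine ⟨f v, Or.inl ⟨hv, rfl⟩, ?_⟩
    rintro w (⟨-, rfl⟩ | ⟨hw, rfl⟩)
    · rfl
    · exact absurd hv (hout hw)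
  · refine ⟨x, Or.inr ⟨hx, rfl⟩, ?_⟩
    rintro w (⟨hfx, -⟩ | ⟨hw, hfw⟩)
    · exact absurd hfx (hout hx)
    · exact hf hw hx hfw

theorem edgeSet_matchingOfPartner :
    (matchingOfPartner C f hadj).edgeSet = (fun x => s(x, f x)) '' C := by
  ext e
  induction e using Sym2.ind with
  | _ v w =>
    simp only [Subgraph.mem_edgeSet, matchingOfPartner, Set.mem_image, Sym2.eq_iff]
    constructor
    · rintro (⟨hv, rfl⟩ | ⟨hw, rfl⟩)
      · exact ⟨v, hv, Or.inl ⟨rfl, rfl⟩⟩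
      · exact ⟨w, hw, Or.inr ⟨rfl, rfl⟩⟩
    · rintro ⟨x, hx, ⟨rfl, rfl⟩ | ⟨rfl, rfl⟩⟩
      · exact Or.inl ⟨hx, rfl⟩
      · exact Or.inr ⟨hx, rfl⟩

theorem card_edgeSet_matchingOfPartner (hout : Set.MapsTo f C Cᶜ) :
    Nat.card (matchingOfPartner C f hadj).edgeSet = Nat.card C := by
  rw [edgeSet_matchingOfPartner, Nat.card_image_of_injOn]
  rintro x hx y hy hxy
  rcases Sym2.eq_iff.mp hxy with ⟨rfl, -⟩ | ⟨rfl, -⟩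
  · rfl
  · exact absurd hx (hout hy)

end MatchingOfPartner

namespace Gnp

variable {q l : ℕ}

/-- `V[i,⊥,z] ↦ U[i,1,z]`, `W[i,j,⊥] ↦ P[i,j,⊥]`, `V[⊥,⊥,⊥] ↦ P[⊥,⊥,⊥]`, identity elsewhere. -/
def partner (hl : 1 ≤ l) : VT q l → VT q l
  | .inl (i, z) => .inr (.inr (.inr (.inl (i, ⟨0, hl⟩, z))))
  | .inr (.inl w) => .inr (.inr (.inl w))
  | .inr (.inr (.inr (.inr (.inl ())))) => .inr (.inr (.inr (.inr (.inr ()))))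
  | v => v

variable (G : SimpleGraph (Fin q × Fin 3))

theorem isVertexCover_xset : _root_.IsVertexCover (Gnp (l := l) G) (Xset q l) := by
  intro u v h
  rw [Gnp, fromRel_adj] at h
  rcases u with a | w | p | x | hb | hp <;> rcases v with a' | w' | p' | x' | hb' | hp' <;>
    simp_all [Xset]

variable (hl : 1 ≤ l)

theorem adj_partner : ∀ x ∈ Xset q l, (Gnp G).Adj x (partner hl x) := by
  rintro (a | w | p | u | h | h) hx <;> simp_all [Xset, partner, Gnp]

theorem injOn_partner : Set.InjOn (partner hl) (Xset q l) := by
  rintro (a | w | p | u | h | h) hx (a' | w' | p' | u' | h' | h') hx' <;>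
    simp_all [Xset, partner, Prod.ext_iff]

theorem mapsTo_partner : Set.MapsTo (partner hl) (Xset q l) (Xset q l)ᶜ := by
  rintro (a | w | p | u | h | h) hx <;> simp_all [Xset, partner]

end Gnp

theorem stmt17 {q l : ℕ} (hl : 1 ≤ l) (G : SimpleGraph (Fin q × Fin 3)) :
    IsMinVertexCover (Gnp (l := l) G) (Xset q l) ∧
    ∃ M : (Gnp (l := l) G).Subgraph, M.IsMatching ∧
      Nat.card M.edgeSet = Nat.card (Xset q l) := by
  have hadj := Gnp.adj_partner G hl
  have hM := isMatching_matchingOfPartner hadj (Gnp.injOn_partner hl) (Gnp.mapsTo_partner hl)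
  have hcard := card_edgeSet_matchingOfPartner hadj (Gnp.mapsTo_partner hl)
  exact ⟨isMinVertexCover_of_isMatching_card_eq (Gnp.isVertexCover_xset G) hM hcard, _, hM, hcard⟩
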